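/- Let a > 0, b > 0, A ≤ 0, B ∈ ℝ and h > 0, and define L(h, r) = A / (1 + a·exp(−b·((180/π)·arctan(h/r) − a))) + 10·log₁₀(h² + r²) + B. If R₁ > 0 and R₂ > 0 satisfy L(h, R₁) = T₁ and L(h, R₂) = T₂ with T₁ < T₂, then R₁ < R₂. -/

import Mathlib

/-!
The mean path loss is nondecreasing in the horizontal distance `r > 0`: the free-space term
`10 log₁₀ (h² + r²)` grows with `r`, while the elevation angle `arctan (h / r)` shrinks, which
lowers the LoS probability and so raises the (nonpositive) excess-loss term `A / (1 + a e^{…})`.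
A nondecreasing function that takes a smaller value at `R₁` than at `R₂` forces `R₁ < R₂`.
-/

open Real Set

noncomputable section

def elevationAngle (h r : ℝ) : ℝ := 180 / π * arctan (h / r)

def pathLoss (a b A B h r : ℝ) : ℝ :=
  A / (1 + a * exp (-b * (elevationAngle h r - a))) + 10 * logb 10 (h ^ 2 + r ^ 2) + B

end

theorem elevationAngle_antitoneOn {h : ℝ} (hh : 0 ≤ h) :
    AntitoneOn (elevationAngle h) (Ioi 0) := fun _ hr _ _ hrs =>
  mul_le_mul_of_nonneg_left
    (arctan_strictMono.monotone (div_le_div_of_nonneg_left hh hr hrs)) (by positivity)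

theorem excessLoss_antitone {a b A : ℝ} (ha : 0 ≤ a) (hb : 0 ≤ b) (hA : A ≤ 0) :
    Antitone fun θ : ℝ => A / (1 + a * exp (-b * (θ - a))) := by
  intro θ θ' hθ
  have hden : 1 + a * exp (-b * (θ' - a)) ≤ 1 + a * exp (-b * (θ - a)) := by
    gcongr 1 + a * exp ?_
    exact mul_le_mul_of_nonpos_left (by linarith) (neg_nonpos.mpr hb)
  rw [← neg_le_neg_iff, ← neg_div, ← neg_div]
  exact div_le_div_of_nonneg_left (neg_nonneg.mpr hA) (by positivity) hden

theorem freeSpaceLoss_monotoneOn (h : ℝ) :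
    MonotoneOn (fun r : ℝ => 10 * logb 10 (h ^ 2 + r ^ 2)) (Ioi 0) := by
  intro r (hr : 0 < r) s _ hrs
  have hsq : h ^ 2 + r ^ 2 ≤ h ^ 2 + s ^ 2 := by gcongr
  simpa using logb_le_logb_of_le (by norm_num : (1 : ℝ) < 10) (by positivity) hsq

theorem pathLoss_monotoneOn {a b A h : ℝ} (B : ℝ) (ha : 0 ≤ a) (hb : 0 ≤ b) (hA : A ≤ 0)
    (hh : 0 ≤ h) : MonotoneOn (pathLoss a b A B h) (Ioi 0) :=
  (((excessLoss_antitone ha hb hA).comp_antitoneOn (elevationAngle_antitoneOn hh)).add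
    (freeSpaceLoss_monotoneOn h)).add_const B

/-- A larger path-loss threshold yields a larger coverage radius. -/
theorem stmt_4 (a b A B h : ℝ) (ha : 0 < a) (hb : 0 < b) (hA : A ≤ 0) (hh : 0 < h)
    (R₁ R₂ T₁ T₂ : ℝ) (hR₁ : 0 < R₁) (hR₂ : 0 < R₂)
    (h1 : A / (1 + a * Real.exp (-b * ((180 / Real.pi) * Real.arctan (h / R₁) - a)))
        + 10 * Real.logb 10 (h ^ 2 + R₁ ^ 2) + B = T₁)
    (h2 : A / (1 + a * Real.exp (-b * ((180 / Real.pi) * Real.arctan (h / R₂) - a)))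
        + 10 * Real.logb 10 (h ^ 2 + R₂ ^ 2) + B = T₂)
    (hT : T₁ < T₂) :
    R₁ < R₂ :=
  (pathLoss_monotoneOn B ha.le hb.le hA hh.le).reflect_lt hR₁ hR₂
    (h1.trans_lt (hT.trans_eq h2.symm))
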